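/- arXiv:1702.05079 — 6 statements merged into one kernel-verified Lean document; each statement's English description precedes it below -/
import Mathlib

section
/- Let A be an information system with witnesses. If Axioms (4),(5),(7),(8),(9) hold, then the two interpolation axioms (10) and (11) together are equivalent to the Global Interpolation Property: for all (i,X) ∈ Con and finite F ⊆ A, if (i,X) ⊢ F then there exists (j,Y) ∈ Con with (i,X) ⊢ j, (i,X) ⊢ Y, (j,Y) ⊢ F. -/
/-- The way-below (approximation) relation in a preorder: `x` approximates `y` if
for every directed set `S` whose least upper bound exists, `y ≤ sup S` implies
`x ≤ u` for some `u ∈ S`. -/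
def wayBelow {α : Type*} [Preorder α] (x y : α) : Prop :=
  ∀ S : Set α, DirectedOn (· ≤ ·) S → S.Nonempty →
    ∀ l, IsLUB S l → y ≤ l → ∃ u ∈ S, x ≤ u

/-- Information system with witnesses (Definition 3.1). -/
structure IWS (A : Type*) where
  Δ : A
  Con : A → Finset A → Prop
  ent : A → Finset A → A → Prop
  entCon : ∀ i X a, ent i X a → Con i X
  ax1 : ∀ i, Con i {i}
  ax2 : ∀ i X Y, Y ⊆ X → Con i X → Con i Y
  ax3 : ∀ i, ent i ∅ Δ
  ax4 : ∀ i X Y, Con i X → (∀ a ∈ Y, ent i X a) → Con i Y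
  ax5 : ∀ i X Y a, Con i X → Con i Y → X ⊆ Y → ent i X a → ent i Y a
  ax6 : ∀ i X Y a, Con i X → (∀ b ∈ Y, ent i X b) → ent i Y a → ent i X a
  ax7 : ∀ i X a, ent i X a → ∃ Z, Con i Z ∧ (∀ z ∈ Z, ent i X z) ∧ ent i Z a
  ax8 : ∀ i X Y, Con i X → (∀ y ∈ Y, ent i X y) → ∃ e, ent i X e ∧ Con e Y
  ax9 : ∀ i j, Con j {i} → ∀ X, Con i X → Con j X
  ax10 : ∀ i j X a, Con j {i} → Con i X → ent i X a → ent j X a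
  ax11 : ∀ i j X a, Con j {i} → Con i X → ent j X a → ent i X a

namespace IWS

variable {A : Type*}

/-- A state of an information system with witnesses (Definition 3.5):
finitely consistent, entailment-closed and derivable. -/
def state (S : IWS A) (x : Set A) : Prop :=
  (∀ F : Finset A, ↑F ⊆ x → ∃ i ∈ x, S.Con i F) ∧
  (∀ i ∈ x, ∀ X : Finset A, ↑X ⊆ x → ∀ a, S.Con i X → S.ent i X a → a ∈ x) ∧
  (∀ a ∈ x, ∃ i ∈ x, ∃ X : Finset A, ↑X ⊆ x ∧ S.Con i X ∧ S.ent i X a)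

/-- X-equivalence of witnesses (Definition 5.1). -/
def weq (S : IWS A) (X : Finset A) (i j : A) : Prop :=
  ∃ (n : ℕ) (a k : ℕ → A), a 0 = i ∧ a n = j ∧
    ∀ ν, 1 ≤ ν → ν ≤ n →
      S.Con (a (ν - 1)) X ∧ S.Con (a ν) X ∧
      S.Con (k ν) {a (ν - 1)} ∧ S.Con (k ν) {a ν}

end IWS

/-- Approximable mappings between information systems with witnesses (Definition 4.1). -/
structure AppMap {A A' : Type*} (S : IWS A) (S' : IWS A') where
  rel : A → Finset A → A' → Prop
  relCon : ∀ i X b, rel i X b → S.Con i X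
  am1 : rel S.Δ ∅ S'.Δ
  am2 : ∀ i X X' b, S.Con i X → S.Con i X' → X ⊆ X' → rel i X b → rel i X' b
  am3 : ∀ i X X' b, S.Con i X → (∀ a ∈ X', S.ent i X a) → rel i X' b → rel i X b
  am4 : ∀ i X b, S.Con i X → rel i X b →
    ∃ U, S.Con i U ∧ (∀ u ∈ U, S.ent i X u) ∧ rel i U b
  am5 : ∀ i X k Y b, S.Con i X → S'.Con k Y → rel i X k → (∀ y ∈ Y, rel i X y) →
    S'.ent k Y b → rel i X b
  am6 : ∀ i X b, S.Con i X → rel i X b →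
    ∃ d V, S'.Con d V ∧ rel i X d ∧ (∀ v ∈ V, rel i X v) ∧ S'.ent d V b
  am7 : ∀ i X F, S.Con i X → (∀ c ∈ F, rel i X c) → ∃ e, rel i X e ∧ S'.Con e F
  am8 : ∀ i j X b, S.Con j {i} → S.Con i X → rel i X b → rel j X b
  am9 : ∀ i j X b, S.Con j {i} → S.Con i X → rel j X b → rel i X b


/-! Forward direction: interpolate each `a ∈ F` separately (`ax7`) and take the union `Y` of the
interpolants; it is consistent for `i` by `ax4` and entails all of `F` by `ax5`. `ax8` supplies a
witness `e` of `Y` with `(i, X) ⊢ e`, so `{e} ∈ Con(i)`, and `ax11` moves `(i, Y) ⊢ F` down to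
`(e, Y) ⊢ F`. Backward direction: the global interpolant `(j, Y)` for `F = {a}` gives `ax7` once
`ax10` moves `(j, Y) ⊢ a` up to `(i, Y) ⊢ a`, and its witness `j` gives `ax8` by `ax4`. -/

section GlobalInterpolation

variable {A : Type*} {Con : A → Finset A → Prop} {ent : A → Finset A → A → Prop}

theorem con_singleton_of_ent
    (ax4 : ∀ i X Y, Con i X → (∀ a ∈ Y, ent i X a) → Con i Y)
    {i j : A} {X : Finset A} (hX : Con i X) (hj : ent i X j) : Con i {j} :=
  ax4 i X {j} hX (by simpa using hj)

theorem exists_common_interpolant [DecidableEq A]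
    (ax4 : ∀ i X Y, Con i X → (∀ a ∈ Y, ent i X a) → Con i Y)
    (ax5 : ∀ i X Y a, Con i X → Con i Y → X ⊆ Y → ent i X a → ent i Y a)
    (ax7 : ∀ i X a, Con i X → ent i X a → ∃ Z, Con i Z ∧ (∀ z ∈ Z, ent i X z) ∧ ent i Z a)
    {i : A} {X : Finset A} (hX : Con i X) (F : Finset A) (hF : ∀ a ∈ F, ent i X a) :
    ∃ Y, Con i Y ∧ (∀ y ∈ Y, ent i X y) ∧ ∀ a ∈ F, ent i Y a := by
  induction F using Finset.induction_on with
  | empty => exact ⟨∅, ax4 i X ∅ hX (by simp), by simp, by simp⟩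
  | insert a F _ ih =>
    obtain ⟨Y, hY, hXY, hYF⟩ := ih fun b hb ↦ hF b (Finset.mem_insert_of_mem hb)
    obtain ⟨Z, hZ, hXZ, hZa⟩ := ax7 i X a hX (hF a (Finset.mem_insert_self a F))
    have hXYZ : ∀ y ∈ Z ∪ Y, ent i X y := by
      simpa only [Finset.mem_union, or_imp, forall_and] using ⟨hXZ, hXY⟩
    have hYZ : Con i (Z ∪ Y) := ax4 i X _ hX hXYZ
    refine ⟨Z ∪ Y, hYZ, hXYZ, ?_⟩
    rintro b hb
    rcases Finset.mem_insert.mp hb with rfl | hb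
    · exact ax5 i Z _ b hZ hYZ Finset.subset_union_left hZa
    · exact ax5 i Y _ b hY hYZ Finset.subset_union_right (hYF b hb)

theorem global_interpolation_of_interpolation
    (ax4 : ∀ i X Y, Con i X → (∀ a ∈ Y, ent i X a) → Con i Y)
    (ax5 : ∀ i X Y a, Con i X → Con i Y → X ⊆ Y → ent i X a → ent i Y a)
    (ax11 : ∀ i j X a, Con j {i} → Con i X → ent j X a → ent i X a)
    (ax7 : ∀ i X a, Con i X → ent i X a → ∃ Z, Con i Z ∧ (∀ z ∈ Z, ent i X z) ∧ ent i Z a)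
    (ax8 : ∀ i X Y, Con i X → (∀ y ∈ Y, ent i X y) → ∃ e, ent i X e ∧ Con e Y)
    {i : A} {X F : Finset A} (hX : Con i X) (hF : ∀ a ∈ F, ent i X a) :
    ∃ j Y, Con j Y ∧ ent i X j ∧ (∀ y ∈ Y, ent i X y) ∧ ∀ a ∈ F, ent j Y a := by
  classical
  obtain ⟨Y, -, hXY, hYF⟩ := exists_common_interpolant ax4 ax5 ax7 hX F hF
  obtain ⟨e, hXe, heY⟩ := ax8 i X Y hX hXY
  exact ⟨e, Y, heY, hXe, hXY, fun a ha ↦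
    ax11 e i Y a (con_singleton_of_ent ax4 hX hXe) heY (hYF a ha)⟩

theorem interpolation_of_global_interpolation
    (gip : ∀ i (X F : Finset A), Con i X → (∀ a ∈ F, ent i X a) →
      ∃ j Y, Con j Y ∧ ent i X j ∧ (∀ y ∈ Y, ent i X y) ∧ ∀ a ∈ F, ent j Y a)
    (ax4 : ∀ i X Y, Con i X → (∀ a ∈ Y, ent i X a) → Con i Y)
    (ax10 : ∀ i j X a, Con j {i} → Con i X → ent i X a → ent j X a)
    {i : A} {X : Finset A} {a : A} (hX : Con i X) (ha : ent i X a) :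
    ∃ Z, Con i Z ∧ (∀ z ∈ Z, ent i X z) ∧ ent i Z a := by
  obtain ⟨j, Y, hjY, hXj, hXY, hYa⟩ := gip i X {a} hX (by simpa using ha)
  exact ⟨Y, ax4 i X Y hX hXY, hXY,
    ax10 j i Y a (con_singleton_of_ent ax4 hX hXj) hjY (hYa a (Finset.mem_singleton_self a))⟩

theorem witness_of_global_interpolation
    (gip : ∀ i (X F : Finset A), Con i X → (∀ a ∈ F, ent i X a) →
      ∃ j Y, Con j Y ∧ ent i X j ∧ (∀ y ∈ Y, ent i X y) ∧ ∀ a ∈ F, ent j Y a)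
    (ax4 : ∀ i X Y, Con i X → (∀ a ∈ Y, ent i X a) → Con i Y)
    {i : A} {X Y : Finset A} (hX : Con i X) (hY : ∀ y ∈ Y, ent i X y) :
    ∃ e, ent i X e ∧ Con e Y := by
  obtain ⟨j, Y', hjY', hXj, -, hY'Y⟩ := gip i X Y hX hY
  exact ⟨j, hXj, ax4 j Y' Y hjY' hY'Y⟩

end GlobalInterpolation

theorem gip_equiv_general {A : Type*} (Con : A → Finset A → Prop)
    (ent : A → Finset A → A → Prop)
    (ax4 : ∀ i X Y, Con i X → (∀ a ∈ Y, ent i X a) → Con i Y)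
    (ax5 : ∀ i X Y a, Con i X → Con i Y → X ⊆ Y → ent i X a → ent i Y a)
    (ax10 : ∀ i j X a, Con j {i} → Con i X → ent i X a → ent j X a)
    (ax11 : ∀ i j X a, Con j {i} → Con i X → ent j X a → ent i X a) :
    ((∀ i (X : Finset A) a, Con i X → ent i X a →
        ∃ Z, Con i Z ∧ (∀ z ∈ Z, ent i X z) ∧ ent i Z a) ∧
     (∀ i (X Y : Finset A), Con i X → (∀ y ∈ Y, ent i X y) →
        ∃ e, ent i X e ∧ Con e Y)) ↔
    (∀ i (X F : Finset A), Con i X → (∀ a ∈ F, ent i X a) →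
      ∃ j Y, Con j Y ∧ ent i X j ∧ (∀ y ∈ Y, ent i X y) ∧ ∀ a ∈ F, ent j Y a) :=
  ⟨fun ⟨ax7, ax8⟩ _ _ _ hX hF ↦ global_interpolation_of_interpolation ax4 ax5 ax11 ax7 ax8 hX hF,
    fun gip ↦ ⟨fun _ _ _ hX ha ↦ interpolation_of_global_interpolation gip ax4 ax10 hX ha,
      fun _ _ _ hX hY ↦ witness_of_global_interpolation gip ax4 hX hY⟩⟩

/-- Lemma 3.2 (Global Interpolation Property). -/
theorem gip_equiv {A : Type*} (Δ : A) (Con : A → Finset A → Prop)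
    (ent : A → Finset A → A → Prop)
    (ax4 : ∀ i X Y, Con i X → (∀ a ∈ Y, ent i X a) → Con i Y)
    (ax5 : ∀ i X Y a, Con i X → Con i Y → X ⊆ Y → ent i X a → ent i Y a)
    (ax9 : ∀ i j, Con j {i} → ∀ X, Con i X → Con j X)
    (ax10 : ∀ i j X a, Con j {i} → Con i X → ent i X a → ent j X a)
    (ax11 : ∀ i j X a, Con j {i} → Con i X → ent j X a → ent i X a) :
    ((∀ i (X : Finset A) a, Con i X → ent i X a →
        ∃ Z, Con i Z ∧ (∀ z ∈ Z, ent i X z) ∧ ent i Z a) ∧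
     (∀ i (X Y : Finset A), Con i X → (∀ y ∈ Y, ent i X y) →
        ∃ e, ent i X e ∧ Con e Y)) ↔
    (∀ i (X F : Finset A), Con i X → (∀ a ∈ F, ent i X a) →
      ∃ j Y, Con j Y ∧ ent i X j ∧ (∀ y ∈ Y, ent i X y) ∧ ∀ a ∈ F, ent j Y a) :=
  gip_equiv_general Con ent ax4 ax5 ax10 ax11
end

section
/- Let (A, Con, ⊢, Δ) be an information system with witnesses. Then for all a ∈ A and (i,X), (j,Y) ∈ Con: if (i,X) ⊢ j, (i,X) ⊢ Y, and (j,Y) ⊢ a, then (i,X) ⊢ a. -/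
namespace IWS

variable {A : Type*} (S : IWS A) {i j e : A} {X Y : Finset A} {a : A}

theorem con_singleton_of_ent (h : S.ent i X e) : S.Con i {e} :=
  S.ax4 i X {e} (S.entCon i X e h) (by simpa using h)

theorem ent_of_con_singleton (hji : S.Con j {i}) (h : S.ent i X a) : S.ent j X a :=
  S.ax10 i j X a hji (S.entCon i X a h) h

end IWS

theorem strong_trans_general {A : Type*} (S : IWS A) (i j : A) (X Y : Finset A) (a : A)
    (hj : S.ent i X j) (hYent : ∀ y ∈ Y, S.ent i X y)
    (ha : S.ent j Y a) : S.ent i X a := by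
  classical
  have hX : S.Con i X := S.entCon i X j hj
  -- A common witness `e` of `j` and `Y`, entailed by `(i, X)`, lets `(j, Y) ⊢ a` travel to `(i, Y) ⊢ a`.
  obtain ⟨e, hie, hejY⟩ := S.ax8 i X (insert j Y) hX (by
    simpa only [Finset.forall_mem_insert] using ⟨hj, hYent⟩)
  have heY : S.ent e Y a :=
    S.ent_of_con_singleton (S.ax2 e _ _ (by simp) hejY) ha
  have hiY : S.ent i Y a := S.ent_of_con_singleton (S.con_singleton_of_ent hie) heY
  exact S.ax6 i X Y a hX hYent hiY

/-- Lemma 3.4: strong transitivity of entailment across witnesses. -/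
theorem strong_trans {A : Type*} (S : IWS A) (i j : A) (X Y : Finset A) (a : A)
    (hX : S.Con i X) (hY : S.Con j Y)
    (hj : S.ent i X j) (hYent : ∀ y ∈ Y, S.ent i X y)
    (ha : S.ent j Y a) : S.ent i X a :=
  strong_trans_general S i j X Y a hj hYent ha
end

section
/- Let (A, Con, ⊢, Δ) be an information system with witnesses and z a state of A. Then the family { [X]_i : (i,X) ∈ Con, {i} ∪ X ⊆ z } is directed under inclusion and its union equals z. -/
/-! Directedness: a witness `k ∈ z` consistent with `{i, j} ∪ X ∪ Y` dominates `i` and `j`, so by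
`ax10` and monotonicity (`ax5`) both `[X]_i` and `[Y]_j` lie in `[X ∪ Y]_k`. The union is `z` by
entailment closure (`⊆`) and derivability (`⊇`). -/

namespace IWS

variable {A : Type*} {S : IWS A}

/-- `[X]_i`. -/
def entailed (S : IWS A) (i : A) (X : Finset A) : Set A := {a | S.ent i X a}

def approximants (S : IWS A) (z : Set A) : Set (Set A) :=
  {w | ∃ i, ∃ X : Finset A, S.Con i X ∧ i ∈ z ∧ ↑X ⊆ z ∧ w = S.entailed i X}

theorem entailed_subset_of_con {i k : A} {X Y W : Finset A} (hk : S.Con k W) (hiW : i ∈ W)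
    (hYW : Y ⊆ W) (hi : S.Con i X) (hXY : X ⊆ Y) : S.entailed i X ⊆ S.entailed k Y := by
  intro a ha
  have hki : S.Con k {i} := S.ax2 _ _ _ (Finset.singleton_subset_iff.2 hiW) hk
  have hkX : S.Con k X := S.ax2 _ _ _ (hXY.trans hYW) hk
  exact S.ax5 k X Y a hkX (S.ax2 _ _ _ hYW hk) hXY (S.ax10 i k X a hki hi ha)

namespace state

variable {z : Set A}

theorem approximants_nonempty (hz : S.state z) : (S.approximants z).Nonempty := by
  obtain ⟨i, hiz, hi⟩ := hz.1 ∅ (Finset.coe_empty ▸ Set.empty_subset z)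
  exact ⟨_, i, ∅, hi, hiz, by simp, rfl⟩

theorem directedOn_approximants (hz : S.state z) : DirectedOn (· ⊆ ·) (S.approximants z) := by
  classical
  rintro _ ⟨i, X, hi, hiz, hXz, rfl⟩ _ ⟨j, Y, hj, hjz, hYz, rfl⟩
  set W : Finset A := insert i (insert j (X ∪ Y))
  have hWz : ↑W ⊆ z := by
    simp only [W, Finset.coe_insert, Finset.coe_union, Set.insert_subset_iff, Set.union_subset_iff]
    exact ⟨hiz, hjz, hXz, hYz⟩
  obtain ⟨k, hkz, hk⟩ := hz.1 W hWz
  have hXYW : X ∪ Y ⊆ W := (Finset.subset_insert _ _).trans (Finset.subset_insert _ _)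
  refine ⟨S.entailed k (X ∪ Y), ⟨k, X ∪ Y, S.ax2 _ _ _ hXYW hk, hkz, ?_, rfl⟩, ?_, ?_⟩
  · simpa only [Finset.coe_union] using Set.union_subset hXz hYz
  · exact entailed_subset_of_con hk (by simp [W]) hXYW hi Finset.subset_union_left
  · exact entailed_subset_of_con hk (by simp [W]) hXYW hj Finset.subset_union_right

theorem sUnion_approximants (hz : S.state z) : ⋃₀ S.approximants z = z := by
  apply Set.Subset.antisymm
  · rintro a ⟨_, ⟨i, X, hi, hiz, hXz, rfl⟩, ha⟩
    exact hz.2.1 i hiz X hXz a hi ha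
  · intro a ha
    obtain ⟨i, hiz, X, hXz, hi, hent⟩ := hz.2.2 a ha
    exact ⟨_, ⟨i, X, hi, hiz, hXz, rfl⟩, hent⟩

end state

end IWS

/-- For every state z, the family of all [X]_i with {i} ∪ X ⊆ z is directed
(under inclusion) and its union is z. -/
theorem state_directed_union {A : Type*} (S : IWS A) (z : Set A) (hz : S.state z) :
    ({w : Set A | ∃ i, ∃ X : Finset A, S.Con i X ∧ i ∈ z ∧ ↑X ⊆ z ∧
        w = {a | S.ent i X a}}).Nonempty ∧
    DirectedOn (· ⊆ ·)
      {w : Set A | ∃ i, ∃ X : Finset A, S.Con i X ∧ i ∈ z ∧ ↑X ⊆ z ∧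
        w = {a | S.ent i X a}} ∧
    ⋃₀ {w : Set A | ∃ i, ∃ X : Finset A, S.Con i X ∧ i ∈ z ∧ ↑X ⊆ z ∧
        w = {a | S.ent i X a}} = z :=
  ⟨hz.approximants_nonempty, hz.directedOn_approximants, hz.sUnion_approximants⟩
end

section
/- Let (A, Con, ⊢, Δ) be an information system with witnesses and x, y states of A (ordered by inclusion). Then x ≪ y (x approximates y in the dcpo of states) if and only if there exists (i,V) ∈ Con with {i} ∪ V ⊆ y and (i,V) ⊢ x, i.e. (i,V) ⊢ a for all a ∈ x. -/
/-!
The principal states `{a | (i, V) ⊢ a}` with `{i} ∪ V ⊆ y` form a directed family whose union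
is `y`, so `x ≪ y` puts `x` below one of them. Conversely, directed suprema of states are
unions, so the finitely many tokens `{i} ∪ V` of `y` already lie in a single member of any
directed family whose supremum lies above `y`; that member is closed under entailment and
hence contains `x`.
-/

namespace IWS

variable {A : Type*} (S : IWS A)

abbrev States := {x : Set A // S.state x}

variable {S}

theorem state_setOf_ent {i : A} {V : Finset A} (h : S.Con i V) : S.state {a | S.ent i V a} := by
  refine ⟨fun F hF => S.ax8 i V F h hF, ?closed, ?derivable⟩
  case closed =>
    intro j hj X hX a hjX hXa
    have hij : S.Con i {j} := S.ax4 i V {j} h (by simpa using hj)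
    exact S.ax6 i V X a h hX (S.ax10 j i X a hij hjX hXa)
  case derivable =>
    intro a ha
    obtain ⟨Z, -, hVZ, hZa⟩ := S.ax7 i V a ha
    obtain ⟨e, hVe, heZ⟩ := S.ax8 i V Z h hVZ
    have hie : S.Con i {e} := S.ax4 i V {e} h (by simpa using hVe)
    exact ⟨e, hVe, Z, hVZ, heZ, S.ax11 e i Z a hie heZ hZa⟩

def principal {i : A} {V : Finset A} (h : S.Con i V) : S.States :=
  ⟨{a | S.ent i V a}, state_setOf_ent h⟩

theorem principal_le {x : S.States} {i : A} {V : Finset A} (h : S.Con i V) (hi : i ∈ x.1)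
    (hV : ↑V ⊆ x.1) : principal h ≤ x :=
  show {a | S.ent i V a} ⊆ x.1 from fun a ha => x.2.2.1 i hi V hV a h ha

theorem principal_le_principal {i j : A} {V W : Finset A} (hV : S.Con i V) (hW : S.Con j W)
    (hi : i ∈ W) (hVW : V ⊆ W) : principal hV ≤ principal hW := by
  have hji : S.Con j {i} := S.ax2 j W {i} (Finset.singleton_subset_iff.2 hi) hW
  exact fun a ha => S.ax5 j V W a (S.ax2 j W V hVW hW) hW hVW (S.ax10 i j V a hji hV ha)

theorem exists_mem_of_mem_of_finset_subset_biUnion {D : Set S.States}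
    (hD : DirectedOn (· ≤ ·) D) (hne : D.Nonempty) {i : A} {V : Finset A}
    (hi : i ∈ ⋃ u ∈ D, u.1) (hV : ↑V ⊆ ⋃ u ∈ D, u.1) : ∃ u ∈ D, i ∈ u.1 ∧ ↑V ⊆ u.1 := by
  classical
  have hiV : ↑(insert i V) ⊆ ⋃ u ∈ D, u.1 := by
    rw [Finset.coe_insert, Set.insert_subset_iff]
    exact ⟨hi, hV⟩
  obtain ⟨u, hu, hiVu⟩ := hD.exists_mem_subset_of_finset_subset_biUnion (f := Subtype.val) hne hiV
  rw [Finset.coe_insert, Set.insert_subset_iff] at hiVu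
  exact ⟨u, hu, hiVu⟩

theorem state_biUnion {D : Set S.States} (hD : DirectedOn (· ≤ ·) D) (hne : D.Nonempty) :
    S.state (⋃ u ∈ D, u.1) := by
  classical
  refine ⟨?consistent, ?closed, ?derivable⟩
  case consistent =>
    intro F hF
    obtain ⟨u, hu, hFu⟩ := hD.exists_mem_subset_of_finset_subset_biUnion (f := Subtype.val) hne hF
    obtain ⟨k, hk, hkF⟩ := u.2.1 F hFu
    exact ⟨k, Set.mem_biUnion hu hk, hkF⟩
  case closed =>
    intro j hj X hX a hjX hXa
    obtain ⟨u, hu, hju, hXu⟩ := exists_mem_of_mem_of_finset_subset_biUnion hD hne hj hX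
    exact Set.mem_biUnion hu (u.2.2.1 j hju X hXu a hjX hXa)
  case derivable =>
    intro a ha
    obtain ⟨u, hu, hau⟩ := Set.mem_iUnion₂.1 ha
    obtain ⟨k, hk, X, hXu, hkX, hXa⟩ := u.2.2.2 a hau
    exact ⟨k, Set.mem_biUnion hu hk, X, hXu.trans (Set.subset_biUnion_of_mem hu), hkX, hXa⟩

theorem val_subset_biUnion_of_isLUB {D : Set S.States} (hD : DirectedOn (· ≤ ·) D)
    (hne : D.Nonempty) {l : S.States} (hl : IsLUB D l) : l.1 ⊆ ⋃ u ∈ D, u.1 :=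
  hl.2 (show (⟨_, state_biUnion hD hne⟩ : S.States) ∈ upperBounds D from
    fun _ hu => Set.subset_biUnion_of_mem hu)

def principalBelow (y : S.States) : Set S.States :=
  {u | ∃ (i : A) (V : Finset A) (h : S.Con i V), i ∈ y.1 ∧ ↑V ⊆ y.1 ∧ u = principal h}

theorem principalBelow_nonempty (y : S.States) : (principalBelow y).Nonempty := by
  obtain ⟨i, hi, h⟩ := y.2.1 ∅ (by simp)
  exact ⟨_, i, ∅, h, hi, by simp, rfl⟩

theorem directedOn_principalBelow (y : S.States) : DirectedOn (· ≤ ·) (principalBelow y) := by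
  classical
  rintro _ ⟨i₁, V₁, h₁, hi₁, hV₁, rfl⟩ _ ⟨i₂, V₂, h₂, hi₂, hV₂, rfl⟩
  set W := insert i₁ (insert i₂ (V₁ ∪ V₂))
  have hWy : ↑W ⊆ y.1 := by
    simp only [W, Finset.coe_insert, Finset.coe_union, Set.insert_subset_iff,
      Set.union_subset_iff]
    exact ⟨hi₁, hi₂, hV₁, hV₂⟩
  obtain ⟨j, hj, hW⟩ := y.2.1 W hWy
  refine ⟨principal hW, ⟨j, W, hW, hj, hWy, rfl⟩, ?_, ?_⟩
  · exact principal_le_principal h₁ hW (by simp [W]) fun b hb => by simp [W, hb]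
  · exact principal_le_principal h₂ hW (by simp [W]) fun b hb => by simp [W, hb]

theorem isLUB_principalBelow (y : S.States) : IsLUB (principalBelow y) y := by
  refine ⟨?upper, fun b hb => ?least⟩
  case upper =>
    rintro _ ⟨i, V, h, hi, hV, rfl⟩
    exact principal_le h hi hV
  case least =>
    intro a ha
    obtain ⟨i, hi, V, hV, h, hVa⟩ := y.2.2.2 a ha
    exact hb ⟨i, V, h, hi, hV, rfl⟩ hVa

end IWS

/-- Proposition 3.7: characterisation of the approximation relation on states. -/
theorem approx_char {A : Type*} (S : IWS A) (x y : {x : Set A // S.state x}) :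
    wayBelow x y ↔
      ∃ i, ∃ V : Finset A, S.Con i V ∧ i ∈ y.1 ∧ ↑V ⊆ y.1 ∧
        ∀ a ∈ x.1, S.ent i V a := by
  constructor
  · intro hxy
    obtain ⟨_, ⟨i, V, h, hi, hV, rfl⟩, hx⟩ := hxy _ (IWS.directedOn_principalBelow y)
      (IWS.principalBelow_nonempty y) y (IWS.isLUB_principalBelow y) le_rfl
    exact ⟨i, V, h, hi, hV, hx⟩
  · rintro ⟨i, V, h, hi, hV, hx⟩ D hD hne l hl hyl
    have hy : y.1 ⊆ ⋃ u ∈ D, u.1 :=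
      (Subtype.coe_le_coe.2 hyl).trans (IWS.val_subset_biUnion_of_isLUB hD hne hl)
    obtain ⟨u, hu, hiu, hVu⟩ :=
      IWS.exists_mem_of_mem_of_finset_subset_biUnion hD hne (hy hi) (hV.trans hy)
    exact ⟨u, hu, (show x ≤ IWS.principal h from hx).trans (IWS.principal_le h hiu hVu)⟩
end

section
/- Let (A, Con, ⊢, Δ) be an information system with witnesses and x, y, z states with x ⊆ z and y ⊆ z. Then the set ⋃{ [Z]_k : (k,Z) ∈ Con, k ∈ z, Z is a finite subset of x ∪ y } is the least upper bound of x and y within the principal ideal ↓z of the poset of states ordered by inclusion. -/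
/-!
Since `z` is a state, finitely many witnesses of `z` together with finite subsets of
`x ∪ y ⊆ z` are consistent with one witness of `z`, and axioms 9–11 move entailments to that
witness. Hence finitely many elements of the union lie in a single principal state `[W]_m`,
from which the union inherits the state axioms. For minimality, a state `w` between `x ∪ y`
and `z` has its own witness `j` for `Z`, and `(k, Z) ⊢ a` passes to `(j, Z) ⊢ a` through a
witness of `z` consistent with both `j` and `k`.
-/

namespace IWS

variable {A : Type*} (S : IWS A)

def principalUnion (z u : Set A) : Set A :=
  ⋃₀ {w : Set A | ∃ k, ∃ Z : Finset A, S.Con k Z ∧ k ∈ z ∧ ↑Z ⊆ u ∧ w = {a | S.ent k Z a}}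

variable {S}

theorem mem_principalUnion {z u : Set A} {a : A} :
    a ∈ S.principalUnion z u ↔
      ∃ k, ∃ Z : Finset A, S.Con k Z ∧ k ∈ z ∧ ↑Z ⊆ u ∧ S.ent k Z a := by
  constructor
  · rintro ⟨w, ⟨k, Z, hkZ, hk, hZ, rfl⟩, ha⟩
    exact ⟨k, Z, hkZ, hk, hZ, ha⟩
  · rintro ⟨k, Z, hkZ, hk, hZ, ha⟩
    exact ⟨_, ⟨k, Z, hkZ, hk, hZ, rfl⟩, ha⟩

theorem con_singleton_of_ent_s8 {k e : A} {Z : Finset A} (hkZ : S.Con k Z) (he : S.ent k Z e) :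
    S.Con k {e} :=
  S.ax4 k Z {e} hkZ (by simpa using he)

theorem ent_of_con_singleton_of_subset {k m b : A} {Z Y : Finset A} (hmk : S.Con m {k})
    (hmY : S.Con m Y) (hkZ : S.Con k Z) (hZY : Z ⊆ Y) (h : S.ent k Z b) : S.ent m Y b :=
  S.ax5 m Z Y b (S.ax9 k m hmk Z hkZ) hmY hZY (S.ax10 k m Z b hmk hkZ h)

/-- `ax8` provides a witness `e` entailed by `(k, Z)` and consistent with `i`, through which
`(i, X) ⊢ a` is transported back to the witness `k`. -/
theorem ent_trans {k i a : A} {Z X : Finset A} (hkZ : S.Con k Z) (hi : S.ent k Z i)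
    (hX : ∀ b ∈ X, S.ent k Z b) (hiX : S.Con i X) (ha : S.ent i X a) : S.ent k Z a := by
  obtain ⟨e, hke, hei⟩ := S.ax8 k Z {i} hkZ (by simpa using hi)
  have hke1 : S.Con k {e} := con_singleton_of_ent_s8 hkZ hke
  have heX : S.ent e X a := S.ax10 i e X a hei hiX ha
  have hkX : S.ent k X a := S.ax10 e k X a hke1 (S.ax9 i e hei X hiX) heX
  exact S.ax6 k Z X a hkZ hX hkX

theorem exists_ent_of_ent {k a : A} {Z : Finset A} (hkZ : S.Con k Z) (ha : S.ent k Z a) :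
    ∃ e Z', S.ent k Z e ∧ (∀ c ∈ Z', S.ent k Z c) ∧ S.Con e Z' ∧ S.ent e Z' a := by
  obtain ⟨Z', -, hZ'e, hZ'a⟩ := S.ax7 k Z a ha
  obtain ⟨e, hke, heZ'⟩ := S.ax8 k Z Z' hkZ hZ'e
  exact ⟨e, Z', hke, hZ'e, heZ', S.ax11 e k Z' a (con_singleton_of_ent_s8 hkZ hke) heZ' hZ'a⟩

variable {x z u w : Set A}

theorem exists_principal_of_subset_principalUnion (hz : S.state z) (huz : u ⊆ z)
    (F : Finset A) (hF : ↑F ⊆ S.principalUnion z u) :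
    ∃ m ∈ z, ∃ W : Finset A, ↑W ⊆ u ∧ S.Con m W ∧ ∀ b ∈ F, S.ent m W b := by
  classical
  induction F using Finset.induction_on with
  | empty =>
    obtain ⟨m, hm, hm0⟩ := hz.1 ∅ (by simp)
    exact ⟨m, hm, ∅, by simp, hm0, by simp⟩
  | insert b F _ ih =>
    rw [Finset.coe_insert, Set.insert_subset_iff] at hF
    obtain ⟨m, hm, W, hWu, hmW, hWF⟩ := ih hF.2
    obtain ⟨k, Z, hkZ, hk, hZu, hb⟩ := mem_principalUnion.1 hF.1
    have hYu : ↑(W ∪ Z) ⊆ u := by simpa using Set.union_subset hWu hZu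
    obtain ⟨n, hn, hnG⟩ := hz.1 (insert m (insert k (W ∪ Z)))
      (by simpa [Set.insert_subset_iff] using ⟨hm, hk, hWu.trans huz, hZu.trans huz⟩)
    have hnG_sub : ∀ G ⊆ insert m (insert k (W ∪ Z)), S.Con n G := fun G hG =>
      S.ax2 n _ G hG hnG
    have hnY : S.Con n (W ∪ Z) :=
      hnG_sub _ ((Finset.subset_insert k _).trans (Finset.subset_insert m _))
    refine ⟨n, hn, W ∪ Z, hYu, hnY, ?_⟩
    simp only [Finset.mem_insert, forall_eq_or_imp]
    refine ⟨?_, fun c hc => ?_⟩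
    · exact ent_of_con_singleton_of_subset (hnG_sub _ (by simp)) hnY hkZ
        Finset.subset_union_right hb
    · exact ent_of_con_singleton_of_subset (hnG_sub _ (by simp)) hnY hmW
        Finset.subset_union_left (hWF c hc)

theorem state_principalUnion (hz : S.state z) (huz : u ⊆ z) :
    S.state (S.principalUnion z u) := by
  classical
  refine ⟨fun F hF => ?_, fun i hi X hX a hiX ha => ?_, fun a ha => ?_⟩
  · obtain ⟨m, hm, W, hWu, hmW, hWF⟩ :=
      exists_principal_of_subset_principalUnion hz huz F hF
    obtain ⟨e, hme, heF⟩ := S.ax8 m W F hmW hWF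
    exact ⟨e, mem_principalUnion.2 ⟨m, W, hmW, hm, hWu, hme⟩, heF⟩
  · obtain ⟨m, hm, W, hWu, hmW, hW⟩ := exists_principal_of_subset_principalUnion hz huz
      (insert i X) (by simpa [Set.insert_subset_iff] using ⟨hi, hX⟩)
    have hmi : S.ent m W i := hW i (Finset.mem_insert_self i X)
    have hmX : ∀ b ∈ X, S.ent m W b := fun b hb => hW b (Finset.mem_insert_of_mem hb)
    exact mem_principalUnion.2 ⟨m, W, hmW, hm, hWu, ent_trans hmW hmi hmX hiX ha⟩
  · obtain ⟨k, Z, hkZ, hk, hZu, ha⟩ := mem_principalUnion.1 ha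
    obtain ⟨e, Z', hke, hkZ', heZ', hea⟩ := exists_ent_of_ent hkZ ha
    exact ⟨e, mem_principalUnion.2 ⟨k, Z, hkZ, hk, hZu, hke⟩, Z',
      fun c hc => mem_principalUnion.2 ⟨k, Z, hkZ, hk, hZu, hkZ' c hc⟩, heZ', hea⟩

theorem subset_principalUnion (hx : S.state x) (hxz : x ⊆ z) (hxu : x ⊆ u) :
    x ⊆ S.principalUnion z u := fun a ha => by
  obtain ⟨i, hi, X, hXx, hiX, hent⟩ := hx.2.2 a ha
  exact mem_principalUnion.2 ⟨i, X, hiX, hxz hi, hXx.trans hxu, hent⟩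

theorem principalUnion_subset (hz : S.state z) (huz : u ⊆ z) : S.principalUnion z u ⊆ z :=
  fun a ha => by
    obtain ⟨k, Z, hkZ, hk, hZu, ha⟩ := mem_principalUnion.1 ha
    exact hz.2.1 k hk Z (hZu.trans huz) a hkZ ha

theorem principalUnion_subset_of_state (hz : S.state z) (hw : S.state w) (hwz : w ⊆ z)
    (huw : u ⊆ w) : S.principalUnion z u ⊆ w := fun a ha => by
  classical
  obtain ⟨k, Z, hkZ, hk, hZu, ha⟩ := mem_principalUnion.1 ha
  have hZw : ↑Z ⊆ w := hZu.trans huw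
  obtain ⟨j, hj, hjZ⟩ := hw.1 Z hZw
  obtain ⟨m, -, hmjk⟩ :=
    hz.1 {j, k} (by simpa [Set.insert_subset_iff] using ⟨hwz hj, hk⟩)
  have hmZa : S.ent m Z a := S.ax10 k m Z a (S.ax2 m _ {k} (by simp) hmjk) hkZ ha
  exact hw.2.1 j hj Z hZw a hjZ (S.ax11 j m Z a (S.ax2 m _ {j} (by simp) hmjk) hjZ hmZa)

end IWS

/-- Local least upper bounds of states are computed as unions of principal states. -/
theorem local_lub_states {A : Type*} (S : IWS A) (x y z : Set A)
    (hx : S.state x) (hy : S.state y) (hz : S.state z)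
    (hxz : x ⊆ z) (hyz : y ⊆ z) :
    S.state (⋃₀ {w : Set A | ∃ k, ∃ Z : Finset A, S.Con k Z ∧ k ∈ z ∧ ↑Z ⊆ x ∪ y ∧
        w = {a | S.ent k Z a}}) ∧
    x ⊆ ⋃₀ {w : Set A | ∃ k, ∃ Z : Finset A, S.Con k Z ∧ k ∈ z ∧ ↑Z ⊆ x ∪ y ∧
        w = {a | S.ent k Z a}} ∧
    y ⊆ ⋃₀ {w : Set A | ∃ k, ∃ Z : Finset A, S.Con k Z ∧ k ∈ z ∧ ↑Z ⊆ x ∪ y ∧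
        w = {a | S.ent k Z a}} ∧
    (⋃₀ {w : Set A | ∃ k, ∃ Z : Finset A, S.Con k Z ∧ k ∈ z ∧ ↑Z ⊆ x ∪ y ∧
        w = {a | S.ent k Z a}}) ⊆ z ∧
    ∀ w : Set A, S.state w → w ⊆ z → x ⊆ w → y ⊆ w →
      (⋃₀ {u : Set A | ∃ k, ∃ Z : Finset A, S.Con k Z ∧ k ∈ z ∧ ↑Z ⊆ x ∪ y ∧
        u = {a | S.ent k Z a}}) ⊆ w := by
  have hxyz : x ∪ y ⊆ z := Set.union_subset hxz hyz
  exact ⟨IWS.state_principalUnion hz hxyz,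
    IWS.subset_principalUnion hx hxz Set.subset_union_left,
    IWS.subset_principalUnion hy hyz Set.subset_union_right,
    IWS.principalUnion_subset hz hxyz,
    fun w hw hwz hxw hyw =>
      IWS.principalUnion_subset_of_state hz hw hwz (Set.union_subset hxw hyw)⟩
end

section
/- Let A, A' be information systems with witnesses and H ⊆ Con × A'. Then the right interpolation condition (6) together with the witness generation condition (7) of approximable mappings is equivalent to: for all (i,X) ∈ Con and finite F ⊆ A', (i,X) H F implies there exists (e,V) ∈ Con' with (i,X) H (e,V) and (e,V) ⊢' F. -/
namespace IWS

variable {A : Type*} (S : IWS A)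

theorem ent_of_mem_of_subset {d e b : A} {V W : Finset A} (heW : S.Con e W) (hdW : d ∈ W)
    (hVW : V ⊆ W) (hdV : S.Con d V) (hent : S.ent d V b) : S.ent e W b := by
  have hed : S.Con e {d} := S.ax2 e W {d} (Finset.singleton_subset_iff.mpr hdW) heW
  exact S.ax5 e V W b (S.ax2 e W V hVW heW) heW hVW (S.ax10 d e V b hed hdV hent)

theorem exists_interpolant_of_forall_mem (R : A → Prop)
    (interp : ∀ b, R b → ∃ d V, S.Con d V ∧ R d ∧ (∀ v ∈ V, R v) ∧ S.ent d V b)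
    (witness : ∀ F : Finset A, (∀ c ∈ F, R c) → ∃ e, R e ∧ S.Con e F)
    (F : Finset A) (hF : ∀ b ∈ F, R b) :
    ∃ e V, S.Con e V ∧ R e ∧ (∀ v ∈ V, R v) ∧ ∀ b ∈ F, S.ent e V b := by
  classical
  choose! d V hdV hd hV hent using interp
  set W := F.biUnion fun b => insert (d b) (V b)
  have hW : ∀ c ∈ W, R c := by
    simp only [W, Finset.mem_biUnion, Finset.mem_insert]
    rintro c ⟨b, hb, rfl | hc⟩
    exacts [hd b (hF b hb), hV b (hF b hb) c hc]
  obtain ⟨e, he, heW⟩ := witness W hW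
  refine ⟨e, W, heW, he, hW, fun b hb => ?_⟩
  have hsub : insert (d b) (V b) ⊆ W :=
    Finset.subset_biUnion_of_mem (fun b => insert (d b) (V b)) hb
  exact S.ent_of_mem_of_subset heW (hsub (Finset.mem_insert_self _ _))
    ((Finset.subset_insert _ _).trans hsub) (hdV b (hF b hb)) (hent b (hF b hb))

end IWS

/-- Lemma 4.3: right interpolation plus witness generation are together
equivalent to the extended right interpolation rule. -/
theorem right_rules_equiv {A A' : Type*} (S : IWS A) (S' : IWS A')
    (rel : A → Finset A → A' → Prop) :
    ((∀ i (X : Finset A) b, S.Con i X → rel i X b →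
        ∃ d V, S'.Con d V ∧ rel i X d ∧ (∀ v ∈ V, rel i X v) ∧ S'.ent d V b) ∧
     (∀ i (X : Finset A) (F : Finset A'), S.Con i X → (∀ c ∈ F, rel i X c) →
        ∃ e, rel i X e ∧ S'.Con e F)) ↔
    (∀ i (X : Finset A) (F : Finset A'), S.Con i X → (∀ b ∈ F, rel i X b) →
      ∃ e V, S'.Con e V ∧ rel i X e ∧ (∀ v ∈ V, rel i X v) ∧
        ∀ b ∈ F, S'.ent e V b) := by
  constructor
  · rintro ⟨interp, witness⟩ i X F hX hF
    exact S'.exists_interpolant_of_forall_mem (rel i X) (fun b => interp i X b hX)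
      (fun F => witness i X F hX) F hF
  · intro h
    refine ⟨fun i X b hX hb => ?_, fun i X F hX hF => ?_⟩
    · obtain ⟨e, V, heV, he, hV, hent⟩ := h i X {b} hX (by simpa using hb)
      exact ⟨e, V, heV, he, hV, hent b (Finset.mem_singleton_self b)⟩
    · obtain ⟨e, V, heV, he, -, hent⟩ := h i X F hX hF
      exact ⟨e, he, S'.ax4 e V F heV hent⟩
end
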